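/- Let u, v, z be smooth 2π-periodic-in-x solutions of u_t = v - u u_x, v_t = z - u v_x, z_t = - u z_x. Then for every natural number n, H_n^{(1)} := ∫₀^{2π} zⁿ (v u_x - v_x u - ((n+2)/(n+1)) z) dx is conserved in time. -/

import Mathlib

open Real

noncomputable def pdx (f : ℝ → ℝ → ℝ) (x t : ℝ) : ℝ := deriv (fun y => f y t) x

noncomputable def pdt (f : ℝ → ℝ → ℝ) (x t : ℝ) : ℝ := deriv (fun s => f x s) t

/-- The material derivative `D_t = ∂/∂t + u ∂/∂x` associated to the velocity `u`. -/
noncomputable def matDt (u f : ℝ → ℝ → ℝ) : ℝ → ℝ → ℝ :=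
  fun x t => pdt f x t + u x t * pdx f x t


section auxlem

variable {f : ℝ → ℝ → ℝ}

lemma slice_x_hasDerivAt (hf : ContDiff ℝ (⊤ : ℕ∞) (Function.uncurry f)) (x t : ℝ) :
    HasDerivAt (fun y => f y t) (fderiv ℝ (Function.uncurry f) (x, t) (1, 0)) x := by
  have h1 : HasFDerivAt (Function.uncurry f) (fderiv ℝ (Function.uncurry f) (x, t)) (x, t) :=
    (hf.differentiable (by simp) (x, t)).hasFDerivAt
  have h2 : HasDerivAt (fun y : ℝ => (y, t)) ((1 : ℝ), (0 : ℝ)) x := by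
    simpa using (hasDerivAt_id x).prodMk (hasDerivAt_const x t)
  exact h1.comp_hasDerivAt x h2

lemma slice_t_hasDerivAt (hf : ContDiff ℝ (⊤ : ℕ∞) (Function.uncurry f)) (x t : ℝ) :
    HasDerivAt (fun s => f x s) (fderiv ℝ (Function.uncurry f) (x, t) (0, 1)) t := by
  have h1 : HasFDerivAt (Function.uncurry f) (fderiv ℝ (Function.uncurry f) (x, t)) (x, t) :=
    (hf.differentiable (by simp) (x, t)).hasFDerivAt
  have h2 : HasDerivAt (fun s : ℝ => (x, s)) ((0 : ℝ), (1 : ℝ)) t := by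
    simpa using (hasDerivAt_const t x).prodMk (hasDerivAt_id t)
  exact h1.comp_hasDerivAt t h2

lemma pdx_eq (hf : ContDiff ℝ (⊤ : ℕ∞) (Function.uncurry f)) (x t : ℝ) :
    pdx f x t = fderiv ℝ (Function.uncurry f) (x, t) (1, 0) :=
  (slice_x_hasDerivAt hf x t).deriv

lemma pdt_eq (hf : ContDiff ℝ (⊤ : ℕ∞) (Function.uncurry f)) (x t : ℝ) :
    pdt f x t = fderiv ℝ (Function.uncurry f) (x, t) (0, 1) :=
  (slice_t_hasDerivAt hf x t).deriv

lemma hx' (hf : ContDiff ℝ (⊤ : ℕ∞) (Function.uncurry f)) (x t : ℝ) :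
    HasDerivAt (fun y => f y t) (pdx f x t) x := by
  rw [pdx_eq hf]; exact slice_x_hasDerivAt hf x t

lemma ht' (hf : ContDiff ℝ (⊤ : ℕ∞) (Function.uncurry f)) (x t : ℝ) :
    HasDerivAt (fun s => f x s) (pdt f x t) t := by
  rw [pdt_eq hf]; exact slice_t_hasDerivAt hf x t

lemma contDiff_pdx (hf : ContDiff ℝ (⊤ : ℕ∞) (Function.uncurry f)) :
    ContDiff ℝ (⊤ : ℕ∞) (Function.uncurry (pdx f)) := by
  have h1 : ContDiff ℝ (⊤ : ℕ∞) (fun p : ℝ × ℝ => fderiv ℝ (Function.uncurry f) p (1, 0)) :=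
    (hf.fderiv_right (by simp)).clm_apply contDiff_const
  have h2 : Function.uncurry (pdx f) = fun p : ℝ × ℝ => fderiv ℝ (Function.uncurry f) p (1, 0) := by
    funext p
    exact pdx_eq hf p.1 p.2
  rw [h2]
  exact h1

end auxlem

lemma contDiff_pdt (hf : ContDiff ℝ (⊤ : ℕ∞) (Function.uncurry f)) :
    ContDiff ℝ (⊤ : ℕ∞) (Function.uncurry (pdt f)) := by
  have h1 : ContDiff ℝ (⊤ : ℕ∞) (fun p : ℝ × ℝ => fderiv ℝ (Function.uncurry f) p (0, 1)) :=
    (hf.fderiv_right (by simp)).clm_apply contDiff_const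
  have h2 : Function.uncurry (pdt f) = fun p : ℝ × ℝ => fderiv ℝ (Function.uncurry f) p (0, 1) := by
    funext p
    exact pdt_eq hf p.1 p.2
  rw [h2]
  exact h1

lemma clairaut (hf : ContDiff ℝ (⊤ : ℕ∞) (Function.uncurry f)) (x t : ℝ) :
    pdt (pdx f) x t = pdx (pdt f) x t := by
  have hD : ContDiff ℝ (⊤ : ℕ∞) (fderiv ℝ (Function.uncurry f)) := hf.fderiv_right (by simp)
  have hDD : HasFDerivAt (fderiv ℝ (Function.uncurry f))
      (fderiv ℝ (fderiv ℝ (Function.uncurry f)) (x, t)) (x, t) :=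
    (hD.differentiable (by simp) (x, t)).hasFDerivAt
  set D := fderiv ℝ (Function.uncurry f) with hDdef
  set f'' := fderiv ℝ D (x, t) with hf''def
  have h1 : pdt (pdx f) x t = f'' (0, 1) (1, 0) := by
    have e1 : (fun s => pdx f x s) = fun s => D (x, s) (1, 0) := by
      funext s
      exact pdx_eq hf x s
    have hA : HasFDerivAt (fun p : ℝ × ℝ => D p ((1 : ℝ), (0 : ℝ)))
        ((ContinuousLinearMap.apply ℝ ℝ ((1 : ℝ), (0 : ℝ))).comp f'') (x, t) :=
      (ContinuousLinearMap.apply ℝ ℝ ((1 : ℝ), (0 : ℝ))).hasFDerivAt.comp (x, t) hDD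
    have h2 : HasDerivAt (fun s : ℝ => (x, s)) ((0 : ℝ), (1 : ℝ)) t := by
      simpa using (hasDerivAt_const t x).prodMk (hasDerivAt_id t)
    have h3 : HasDerivAt (fun s => D (x, s) ((1 : ℝ), (0 : ℝ))) (f'' (0, 1) (1, 0)) t :=
      hA.comp_hasDerivAt t h2
    rw [pdt, e1]
    exact h3.deriv
  have h1' : pdx (pdt f) x t = f'' (1, 0) (0, 1) := by
    have e1 : (fun y => pdt f y t) = fun y => D (y, t) (0, 1) := by
      funext y
      exact pdt_eq hf y t
    have hA : HasFDerivAt (fun p : ℝ × ℝ => D p ((0 : ℝ), (1 : ℝ)))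
        ((ContinuousLinearMap.apply ℝ ℝ ((0 : ℝ), (1 : ℝ))).comp f'') (x, t) :=
      (ContinuousLinearMap.apply ℝ ℝ ((0 : ℝ), (1 : ℝ))).hasFDerivAt.comp (x, t) hDD
    have h2 : HasDerivAt (fun y : ℝ => (y, t)) ((1 : ℝ), (0 : ℝ)) x := by
      simpa using (hasDerivAt_id x).prodMk (hasDerivAt_const x t)
    have h3 : HasDerivAt (fun y => D (y, t) ((0 : ℝ), (1 : ℝ))) (f'' (1, 0) (0, 1)) x :=
      by have := hA.comp_hasDerivAt x h2; exact this
    rw [pdx, e1]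
    exact h3.deriv
  rw [h1, h1']
  exact second_derivative_symmetric
    (fun y => (hf.differentiable (by simp) y).hasFDerivAt) hDD (0, 1) (1, 0)


lemma Function.Periodic.deriv' {f : ℝ → ℝ} {c : ℝ} (hf : Function.Periodic f c) :
    Function.Periodic (deriv f) c := by
  intro x
  have e : (fun y => f (y + c)) = f := funext fun y => hf y
  rw [← deriv_comp_add_const, e]

noncomputable def bigF (u v z : ℝ → ℝ → ℝ) (n : ℕ) : ℝ → ℝ → ℝ := fun x s =>
  z x s ^ n * (v x s * pdx u x s - pdx v x s * u x s - ((n : ℝ) + 2) / ((n : ℝ) + 1) * z x s)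

noncomputable def bigG (u v z : ℝ → ℝ → ℝ) (n : ℕ) : ℝ → ℝ → ℝ := fun x s =>
  -(1 / ((n : ℝ) + 1)) * (z x s ^ (n + 1) * u x s) - u x s * bigF u v z n x s

lemma contDiff_bigF {u v z : ℝ → ℝ → ℝ} (hu : ContDiff ℝ (⊤ : ℕ∞) (Function.uncurry u))
    (hv : ContDiff ℝ (⊤ : ℕ∞) (Function.uncurry v)) (hz : ContDiff ℝ (⊤ : ℕ∞) (Function.uncurry z)) (n : ℕ) :
    ContDiff ℝ (⊤ : ℕ∞) (Function.uncurry (bigF u v z n)) :=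
  (hz.pow n).mul (((hv.mul (contDiff_pdx hu)).sub ((contDiff_pdx hv).mul hu)).sub
    (contDiff_const.mul hz))

lemma contDiff_bigG {u v z : ℝ → ℝ → ℝ} (hu : ContDiff ℝ (⊤ : ℕ∞) (Function.uncurry u))
    (hv : ContDiff ℝ (⊤ : ℕ∞) (Function.uncurry v)) (hz : ContDiff ℝ (⊤ : ℕ∞) (Function.uncurry z)) (n : ℕ) :
    ContDiff ℝ (⊤ : ℕ∞) (Function.uncurry (bigG u v z n)) :=
  (contDiff_const.mul ((hz.pow (n + 1)).mul hu)).sub (hu.mul (contDiff_bigF hu hv hz n))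

lemma key_identity {u v z : ℝ → ℝ → ℝ}
    (hu : ContDiff ℝ (⊤ : ℕ∞) (Function.uncurry u))
    (hv : ContDiff ℝ (⊤ : ℕ∞) (Function.uncurry v))
    (hz : ContDiff ℝ (⊤ : ℕ∞) (Function.uncurry z))
    (heq1 : ∀ x t, pdt u x t = v x t - u x t * pdx u x t)
    (heq2 : ∀ x t, pdt v x t = z x t - u x t * pdx v x t)
    (heq3 : ∀ x t, pdt z x t = - u x t * pdx z x t)
    (n : ℕ) (x s : ℝ) :
    pdt (bigF u v z n) x s = pdx (bigG u v z n) x s := by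
  have hpu := contDiff_pdx hu
  have hpv := contDiff_pdx hv
  set c : ℝ := ((n : ℝ) + 2) / ((n : ℝ) + 1) with hc
  -- t-derivatives of slices
  have hut : HasDerivAt (fun s' => u x s') (v x s - u x s * pdx u x s) s := by
    have h0 := ht' hu x s; rwa [heq1] at h0
  have hvt : HasDerivAt (fun s' => v x s') (z x s - u x s * pdx v x s) s := by
    have h0 := ht' hv x s; rwa [heq2] at h0
  have hzt : HasDerivAt (fun s' => z x s') (- u x s * pdx z x s) s := by
    have h0 := ht' hz x s; rwa [heq3] at h0
  have huxt : HasDerivAt (fun s' => pdx u x s')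
      (pdx v x s - (pdx u x s * pdx u x s + u x s * pdx (pdx u) x s)) s := by
    have h0 := ht' hpu x s
    rw [clairaut hu] at h0
    have e : pdx (pdt u) x s
        = pdx v x s - (pdx u x s * pdx u x s + u x s * pdx (pdx u) x s) := by
      have e2 : (fun y => pdt u y s) = fun y => v y s - u y s * pdx u y s := by
        funext y; exact heq1 y s
      rw [pdx, e2]
      exact ((hx' hv x s).sub ((hx' hu x s).mul (hx' hpu x s))).deriv
    rwa [e] at h0
  have hvxt : HasDerivAt (fun s' => pdx v x s')
      (pdx z x s - (pdx u x s * pdx v x s + u x s * pdx (pdx v) x s)) s := by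
    have h0 := ht' hpv x s
    rw [clairaut hv] at h0
    have e : pdx (pdt v) x s
        = pdx z x s - (pdx u x s * pdx v x s + u x s * pdx (pdx v) x s) := by
      have e2 : (fun y => pdt v y s) = fun y => z y s - u y s * pdx v y s := by
        funext y; exact heq2 y s
      rw [pdx, e2]
      exact ((hx' hz x s).sub ((hx' hu x s).mul (hx' hpv x s))).deriv
    rwa [e] at h0
  -- x-derivatives of slices
  have hux := hx' hu x s
  have hvx := hx' hv x s
  have hzx := hx' hz x s
  have huxx := hx' hpu x s
  have hvxx := hx' hpv x s
  -- derivative of the time-slice of F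
  have hFt : HasDerivAt (fun s' => bigF u v z n x s')
      ((n : ℝ) * z x s ^ (n - 1) * (- u x s * pdx z x s)
          * (v x s * pdx u x s - pdx v x s * u x s - c * z x s)
        + z x s ^ n
          * (((z x s - u x s * pdx v x s) * pdx u x s
              + v x s * (pdx v x s - (pdx u x s * pdx u x s + u x s * pdx (pdx u) x s)))
            - ((pdx z x s - (pdx u x s * pdx v x s + u x s * pdx (pdx v) x s)) * u x s
              + pdx v x s * (v x s - u x s * pdx u x s))
            - c * (- u x s * pdx z x s))) s :=
    (hzt.pow n).mul (((hvt.mul huxt).sub (hvxt.mul hut)).sub (hzt.const_mul c))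
  -- derivative of the space-slice of G
  have hFx : HasDerivAt (fun y => bigF u v z n y s)
      ((n : ℝ) * z x s ^ (n - 1) * pdx z x s
          * (v x s * pdx u x s - pdx v x s * u x s - c * z x s)
        + z x s ^ n
          * ((pdx v x s * pdx u x s + v x s * pdx (pdx u) x s)
            - (pdx (pdx v) x s * u x s + pdx v x s * pdx u x s)
            - c * pdx z x s)) x :=
    (hzx.pow n).mul (((hvx.mul huxx).sub (hvxx.mul hux)).sub (hzx.const_mul c))
  have hGx : HasDerivAt (fun y => bigG u v z n y s)
      (-(1 / ((n : ℝ) + 1))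
          * ((↑(n + 1) * z x s ^ (n + 1 - 1) * pdx z x s) * u x s
            + z x s ^ (n + 1) * pdx u x s)
        - (pdx u x s * bigF u v z n x s
            + u x s * ((n : ℝ) * z x s ^ (n - 1) * pdx z x s
                * (v x s * pdx u x s - pdx v x s * u x s - c * z x s)
              + z x s ^ n
                * ((pdx v x s * pdx u x s + v x s * pdx (pdx u) x s)
                  - (pdx (pdx v) x s * u x s + pdx v x s * pdx u x s)
                  - c * pdx z x s)))) x :=
    (((hzx.pow (n + 1)).mul hux).const_mul (-(1 / ((n : ℝ) + 1)))).sub (hux.mul hFx)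
  have e1 : pdt (bigF u v z n) x s = _ := hFt.deriv
  have e2 : pdx (bigG u v z n) x s = _ := hGx.deriv
  rw [e1, e2]
  have hne : ((n : ℝ) + 1) ≠ 0 := by positivity
  simp only [bigF, Nat.add_sub_cancel, Nat.cast_add, Nat.cast_one, hc, pow_succ]
  field_simp
  ring

theorem statement8
    (u v z : ℝ → ℝ → ℝ)
    (hu : ContDiff ℝ (⊤ : ℕ∞) (Function.uncurry u))
    (hv : ContDiff ℝ (⊤ : ℕ∞) (Function.uncurry v))
    (hz : ContDiff ℝ (⊤ : ℕ∞) (Function.uncurry z))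
    (hup : ∀ t, Function.Periodic (fun x => u x t) (2 * Real.pi))
    (hvp : ∀ t, Function.Periodic (fun x => v x t) (2 * Real.pi))
    (hzp : ∀ t, Function.Periodic (fun x => z x t) (2 * Real.pi))
    (heq1 : ∀ x t, pdt u x t = v x t - u x t * pdx u x t)
    (heq2 : ∀ x t, pdt v x t = z x t - u x t * pdx v x t)
    (heq3 : ∀ x t, pdt z x t = - u x t * pdx z x t) :
    ∀ n : ℕ, ∀ t, deriv (fun s => ∫ x in (0:ℝ)..(2 * Real.pi),
      ((z x s) ^ n * (v x s * pdx u x s - pdx v x s * u x s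
        - ((n + 2 : ℝ) / (n + 1 : ℝ)) * z x s))) t = 0 := by
  intro n t
  have hFc := contDiff_bigF hu hv hz n
  have hGc := contDiff_bigG hu hv hz n
  have cF : ∀ s : ℝ, Continuous fun x => bigF u v z n x s := fun s =>
    hFc.continuous.comp (continuous_id.prodMk continuous_const)
  have cF' : ∀ s : ℝ, Continuous fun x => pdt (bigF u v z n) x s := fun s =>
    (contDiff_pdt hFc).continuous.comp (continuous_id.prodMk continuous_const)
  have cG' : Continuous fun x => pdx (bigG u v z n) x t :=
    (contDiff_pdx hGc).continuous.comp (continuous_id.prodMk continuous_const)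
  -- bound on the compact set
  obtain ⟨M, hM⟩ :=
    (isCompact_Icc.prod isCompact_Icc :
        IsCompact ((Set.Icc (0:ℝ) (2 * Real.pi)) ×ˢ (Set.Icc (t - 1) (t + 1)))).exists_bound_of_continuousOn
      ((contDiff_pdt hFc).continuous.continuousOn)
  -- differentiation under the integral sign
  have hder := (intervalIntegral.hasDerivAt_integral_of_dominated_loc_of_deriv_le
      (F := fun s x => bigF u v z n x s) (F' := fun s x => pdt (bigF u v z n) x s)
      (a := (0:ℝ)) (b := 2 * Real.pi) (μ := MeasureTheory.volume)
      (bound := fun _ => M) (x₀ := t) (s := Metric.ball t 1) (Metric.ball_mem_nhds t one_pos)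
      (Filter.Eventually.of_forall fun s => (cF s).aestronglyMeasurable)
      ((cF t).intervalIntegrable 0 (2 * Real.pi))
      ((cF' t).aestronglyMeasurable)
      (MeasureTheory.ae_of_all _ fun x hx s hs => by
        have hx' : x ∈ Set.Icc (0:ℝ) (2 * Real.pi) := by
          rw [Set.uIoc_of_le (by positivity : (0:ℝ) ≤ 2 * Real.pi)] at hx
          exact ⟨hx.1.le, hx.2⟩
        have hs' : s ∈ Set.Icc (t - 1) (t + 1) := by
          rw [Metric.mem_ball, Real.dist_eq] at hs
          have := abs_lt.mp hs
          constructor <;> linarith [this.1, this.2]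
        exact hM (x, s) ⟨hx', hs'⟩)
      (intervalIntegrable_const)
      (MeasureTheory.ae_of_all _ fun x _ s _ => ht' hFc x s)).2
  -- the integral of the time derivative vanishes
  have hI : (∫ x in (0:ℝ)..(2 * Real.pi), pdt (bigF u v z n) x t) = 0 := by
    rw [intervalIntegral.integral_congr
      (g := fun x => pdx (bigG u v z n) x t)
      (fun x _ => key_identity hu hv hz heq1 heq2 heq3 n x t)]
    rw [intervalIntegral.integral_eq_sub_of_hasDerivAt
      (fun x _ => hx' hGc x t) (cG'.intervalIntegrable 0 (2 * Real.pi))]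
    -- periodicity
    have p1 : u (2 * Real.pi) t = u 0 t := by simpa using hup t 0
    have p2 : v (2 * Real.pi) t = v 0 t := by simpa using hvp t 0
    have p3 : z (2 * Real.pi) t = z 0 t := by simpa using hzp t 0
    have p4 : pdx u (2 * Real.pi) t = pdx u 0 t := by simpa [pdx] using (hup t).deriv' 0
    have p5 : pdx v (2 * Real.pi) t = pdx v 0 t := by simpa [pdx] using (hvp t).deriv' 0
    simp only [bigG, bigF, p1, p2, p3, p4, p5, sub_self]
  rw [hI] at hder
  exact hder.deriv
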